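/- arXiv:1910.04214 — 5 statements merged into one kernel-verified Lean document; each statement's English description precedes it below -/
import Mathlib

section
/- Alternative formula for the algorithm's value: for v_A, v_B : 2^N → ℝ with v_A(∅) = v_B(∅) = 0 and |N| = n, ∑_{S ⊆ N} (|S|!·(n−|S|)!/(n+1)!)·(v_A(S) − v_B(S)) = ∑_{S ⊆ N} (|S|!·(n−|S|)!/(n+1)!)·(v̄_A(S) − v̄_B(S)), where v̄(S) = ∑_{i ∈ N \ S}(v(S ∪ {i}) − v(S)). -/
open Finset

-- bijection lemma: pairs (S, i∈N\S) ↦ (T=insert i S, i∈T)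
lemma key_bij {α : Type*} [DecidableEq α] (N : Finset α) (F : Finset α → ℝ) :
    ∑ S ∈ N.powerset, ∑ i ∈ N \ S, F (insert i S)
      = ∑ T ∈ N.powerset, (T.card : ℝ) * F T := by
  have h : ∑ T ∈ N.powerset, (T.card : ℝ) * F T
      = ∑ T ∈ N.powerset, ∑ _i ∈ T, F T := by
    refine Finset.sum_congr rfl fun T _ => ?_
    rw [Finset.sum_const, nsmul_eq_mul]
  rw [h, Finset.sum_sigma' N.powerset (fun S => N \ S) (fun S i => F (insert i S)),
      Finset.sum_sigma' N.powerset (fun T => T) (fun T _ => F T)]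
  refine Finset.sum_nbij' (fun p => ⟨insert p.2 p.1, p.2⟩) (fun p => ⟨p.1.erase p.2, p.2⟩)
    ?_ ?_ ?_ ?_ ?_
  · rintro ⟨S, i⟩ hp
    simp only [Finset.mem_sigma, Finset.mem_sdiff] at hp ⊢
    exact ⟨Finset.insert_subset_iff.2 ⟨hp.2.1, Finset.mem_powerset.1 hp.1⟩ |>
      (fun h => Finset.mem_powerset.2 h), Finset.mem_insert_self _ _⟩
  · rintro ⟨T, i⟩ hp
    simp only [Finset.mem_sigma, Finset.mem_sdiff] at hp ⊢
    refine ⟨Finset.mem_powerset.2 ((Finset.erase_subset _ _).trans (Finset.mem_powerset.1 hp.1)),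
      Finset.mem_powerset.1 hp.1 hp.2, Finset.notMem_erase _ _⟩
  · rintro ⟨S, i⟩ hp
    simp only [Finset.mem_sigma, Finset.mem_sdiff] at hp
    simp [Finset.erase_insert hp.2.2]
  · rintro ⟨T, i⟩ hp
    simp only [Finset.mem_sigma] at hp
    simp [Finset.insert_erase hp.2]
  · rintro ⟨S, i⟩ hp
    rfl

lemma coeff_arith (n k m : ℕ) (hn : n = k + 1 + m) :
    ((k+1).factorial * m.factorial : ℝ) / ((n + 1).factorial : ℝ)
      = (k+1) * ((k.factorial * (m+1).factorial) / ((n + 1).factorial : ℝ))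
        - m * (((k+1).factorial * m.factorial) / ((n + 1).factorial : ℝ)) := by
  have h0 : ((n+1).factorial : ℝ) ≠ 0 := Nat.cast_ne_zero.2 (Nat.factorial_ne_zero _)
  field_simp
  push_cast [Nat.factorial_succ]
  ring

-- core lemma for a single game
lemma single_game {α : Type*} [DecidableEq α] (N : Finset α) (v : Finset α → ℝ) (h0 : v ∅ = 0) :
    ∑ S ∈ N.powerset,
      (S.card.factorial * (N.card - S.card).factorial : ℝ) / ((N.card + 1).factorial : ℝ) * v S
    = ∑ S ∈ N.powerset,
      (S.card.factorial * (N.card - S.card).factorial : ℝ) / ((N.card + 1).factorial : ℝ)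
        * (∑ i ∈ N \ S, (v (insert i S) - v S)) := by
  set n := N.card with hn
  set G : Finset α → ℝ := fun U =>
    ((U.card - 1).factorial * (n - (U.card - 1)).factorial : ℝ) / ((n + 1).factorial : ℝ) * v U
    with hG
  have step1 : ∑ S ∈ N.powerset,
      (S.card.factorial * (n - S.card).factorial : ℝ) / ((n + 1).factorial : ℝ)
        * (∑ i ∈ N \ S, (v (insert i S) - v S))
      = ∑ S ∈ N.powerset, ((∑ i ∈ N \ S, G (insert i S))
          - ((n : ℝ) - S.card) * ((S.card.factorial * (n - S.card).factorial : ℝ)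
              / ((n + 1).factorial : ℝ) * v S)) := by
    refine Finset.sum_congr rfl fun S hS => ?_
    have hSN : S ⊆ N := Finset.mem_powerset.1 hS
    have hcard : (N \ S).card = n - S.card := Finset.card_sdiff_of_subset hSN
    rw [Finset.sum_sub_distrib, mul_sub, Finset.mul_sum, Finset.sum_const, nsmul_eq_mul, hcard]
    congr 1
    · refine Finset.sum_congr rfl fun i hi => ?_
      have hiS : i ∉ S := (Finset.mem_sdiff.1 hi).2
      simp only [hG, Finset.card_insert_of_notMem hiS, Nat.add_sub_cancel]
    · rw [Nat.cast_sub (Finset.card_le_card hSN)]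
      ring
  rw [step1, Finset.sum_sub_distrib, key_bij N G]
  rw [← Finset.sum_sub_distrib]
  refine (Finset.sum_congr rfl fun S hS => ?_).symm
  have hSN : S ⊆ N := Finset.mem_powerset.1 hS
  rcases Finset.eq_empty_or_nonempty S with rfl | hne
  · simp [hG, h0]
  · obtain ⟨k, hk⟩ : ∃ k, S.card = k + 1 :=
      ⟨S.card - 1, (Nat.succ_pred_eq_of_pos (Finset.card_pos.2 hne)).symm⟩
    have hkn : k + 1 ≤ n := hk ▸ Finset.card_le_card hSN
    obtain ⟨m, hm⟩ : ∃ m, n = k + 1 + m := ⟨n - (k+1), (Nat.add_sub_cancel' hkn).symm⟩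
    have h1 : n - S.card = m := by omega
    have h2 : S.card - 1 = k := by omega
    have h3 : n - (S.card - 1) = m + 1 := by omega
    rw [hG]
    have h4 : n - k = m + 1 := by omega
    have h1' : n - (k + 1) = m := by omega
    simp only [hk, Nat.add_sub_cancel, h4, h1']
    have hid := coeff_arith n k m hm
    have hc : ((n : ℝ) - ((k:ℝ) + 1)) = (m : ℝ) := by
      have : (n:ℝ) = (k:ℝ) + 1 + m := by exact_mod_cast congrArg (Nat.cast : ℕ → ℝ) hm
      linarith
    push_cast
    rw [hc]
    linear_combination (-1 : ℝ) * hid * v S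

/-- Alternative formula for the algorithm's Extended Shapley value via total marginal contributions. -/
theorem extended_shapley_alt_formula {α : Type*} [DecidableEq α]
    (N : Finset α) (vA vB : Finset α → ℝ) (hA0 : vA ∅ = 0) (hB0 : vB ∅ = 0) :
    ∑ S ∈ N.powerset,
      (S.card.factorial * (N.card - S.card).factorial : ℝ) / ((N.card + 1).factorial : ℝ)
        * (vA S - vB S)
    = ∑ S ∈ N.powerset,
      (S.card.factorial * (N.card - S.card).factorial : ℝ) / ((N.card + 1).factorial : ℝ)
        * ((∑ i ∈ N \ S, (vA (insert i S) - vA S)) - ∑ i ∈ N \ S, (vB (insert i S) - vB S)) := by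
  have hA := single_game N vA hA0
  have hB := single_game N vB hB0
  simp only [mul_sub, Finset.sum_sub_distrib] at hA hB ⊢
  linarith
end

section
/- For a single game v : 2^N → ℝ with v(∅) = 0 and |N| = n, one has ∑_{S ⊆ N} τ_{S,N+1}·v(S) = ∑_{S ⊆ N} τ_{S,N+1}·v̄(S), where τ_{S,N+1} = |S|!·(n−|S|)!/(n+1)! and v̄(S) = ∑_{i ∈ N \ S}(v(S ∪ {i}) − v(S)). -/
open Finset

private lemma tau_coeff_identity (n t : ℕ) (ht : 1 ≤ t) (htn : t ≤ n) :
    (t : ℝ) * ((t - 1).factorial * (n - (t - 1)).factorial / ((n + 1).factorial))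
      - (n - t : ℕ) * (t.factorial * (n - t).factorial / ((n + 1).factorial))
    = t.factorial * (n - t).factorial / ((n + 1).factorial) := by
  have h1 : (t : ℝ) * (t - 1).factorial = t.factorial := by
    rw_mod_cast [Nat.mul_factorial_pred (by omega)]
  have h2 : n - (t - 1) = (n - t) + 1 := by omega
  rw [h2, Nat.factorial_succ, ← h1]
  push_cast
  ring

/-- Single-game version: ∑ τ_{S,N+1}·v(S) = ∑ τ_{S,N+1}·v̄(S). -/
theorem tau_weighted_sum_eq_marginal_sum {α : Type*} [DecidableEq α]
    (N : Finset α) (v : Finset α → ℝ) (h0 : v ∅ = 0) :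
    ∑ S ∈ N.powerset,
      (S.card.factorial * (N.card - S.card).factorial : ℝ) / ((N.card + 1).factorial : ℝ) * v S
    = ∑ S ∈ N.powerset,
      (S.card.factorial * (N.card - S.card).factorial : ℝ) / ((N.card + 1).factorial : ℝ)
        * ∑ i ∈ N \ S, (v (insert i S) - v S) := by
  set n := N.card with hn
  set c : ℕ → ℝ := fun s => (s.factorial * (n - s).factorial : ℝ) / ((n + 1).factorial : ℝ)
    with hc
  -- Expand the RHS
  have expand : ∀ S ∈ N.powerset,
      c S.card * ∑ i ∈ N \ S, (v (insert i S) - v S)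
      = (∑ i ∈ N \ S, c S.card * v (insert i S)) - (N \ S).card * (c S.card * v S) := by
    intro S hS
    rw [Finset.mul_sum]
    simp_rw [mul_sub]
    rw [Finset.sum_sub_distrib, Finset.sum_const, nsmul_eq_mul]
  rw [Finset.sum_congr rfl expand, Finset.sum_sub_distrib]
  -- Reindex the double sum
  have key : ∑ S ∈ N.powerset, ∑ i ∈ N \ S, c S.card * v (insert i S)
      = ∑ T ∈ N.powerset, (T.card : ℝ) * (c (T.card - 1) * v T) := by
    have : ∀ T ∈ N.powerset, (T.card : ℝ) * (c (T.card - 1) * v T)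
        = ∑ i ∈ T, c (T.card - 1) * v T := by
      intro T hT; rw [Finset.sum_const, nsmul_eq_mul]
    rw [Finset.sum_congr rfl this, Finset.sum_sigma', Finset.sum_sigma']
    apply Finset.sum_nbij' (fun p => (⟨insert p.2 p.1, p.2⟩ : Σ _ : Finset α, α))
      (fun p => (⟨p.1.erase p.2, p.2⟩ : Σ _ : Finset α, α))
    · rintro ⟨S, i⟩ hp
      simp only [Finset.mem_sigma, Finset.mem_powerset, Finset.mem_sdiff] at hp ⊢
      exact ⟨Finset.insert_subset hp.2.1 hp.1, Finset.mem_insert_self _ _⟩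
    · rintro ⟨T, i⟩ hp
      simp only [Finset.mem_sigma, Finset.mem_powerset, Finset.mem_sdiff] at hp ⊢
      exact ⟨(Finset.erase_subset _ _).trans hp.1,
        hp.1 hp.2, Finset.notMem_erase _ _⟩
    · rintro ⟨S, i⟩ hp
      simp only [Finset.mem_sigma, Finset.mem_powerset, Finset.mem_sdiff] at hp
      simp [Finset.erase_insert hp.2.2]
    · rintro ⟨T, i⟩ hp
      simp only [Finset.mem_sigma, Finset.mem_powerset, Finset.mem_sdiff] at hp
      simp [Finset.insert_erase hp.2]
    · rintro ⟨S, i⟩ hp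
      simp only [Finset.mem_sigma, Finset.mem_powerset, Finset.mem_sdiff] at hp
      simp [Finset.card_insert_of_notMem hp.2.2]
  rw [key]
  rw [← Finset.sum_sub_distrib]
  apply Finset.sum_congr rfl
  intro T hT
  rw [Finset.mem_powerset] at hT
  rcases eq_or_ne T ∅ with rfl | hne
  · simp [h0]
  · have ht : 1 ≤ T.card := Finset.card_pos.mpr (Finset.nonempty_iff_ne_empty.mpr hne)
    have htn : T.card ≤ n := Finset.card_le_card hT
    have hcard : (N \ T).card = n - T.card := by
      rw [Finset.card_sdiff_of_subset hT]
    rw [hcard]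
    have := tau_coeff_identity n T.card ht htn
    simp only [hc]
    linear_combination -(this * v T)
end

section
/- Extended Shapley data value decomposition: with N of size n, a ∉ N, and ṽ(S) = v_A(S \ {a}) if a ∈ S, else v_B(S), the Shapley value of a data point i ∈ N in the (n+1)-player game ṽ equals ∑_{S ⊆ N \ {i}} w_{S,N}·τ_{S,N}·(v_A(S ∪ {i}) − v_A(S)) + ∑_{S ⊆ N \ {i}} (1 − w_{S,N})·τ_{S,N}·(v_B(S ∪ {i}) − v_B(S)), where τ_{S,N} = |S|!·(n−|S|−1)!/n! and w_{S,N} = (|S|+1)/(n+1). -/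
open Finset

lemma shap_auxB (n k : ℕ) (h : k < n) :
    ((k.factorial : ℝ) * (((n + 1) - k - 1).factorial : ℝ)) / ((n + 1).factorial : ℝ)
      = (1 - ((k : ℝ) + 1) / ((n : ℝ) + 1))
        * (((k.factorial : ℝ) * ((n - k - 1).factorial : ℝ)) / (n.factorial : ℝ)) := by
  have h1 : (n + 1) - k - 1 = (n - k - 1) + 1 := by omega
  have hcast : ((n - k - 1 : ℕ) : ℝ) + 1 = (n : ℝ) - k := by
    have : n - k - 1 = n - (k + 1) := by omega
    rw [this, Nat.cast_sub (by omega)]; push_cast; ring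
  have hfac : ((n + 1).factorial : ℝ) = ((n : ℝ) + 1) * n.factorial := by
    rw [Nat.factorial_succ]; push_cast; ring
  rw [h1, Nat.factorial_succ, hfac]
  push_cast
  rw [hcast]
  have h2 : ((n : ℝ)) + 1 ≠ 0 := by positivity
  have h3 : (n.factorial : ℝ) ≠ 0 := by positivity
  field_simp
  ring

lemma shap_auxA (n k : ℕ) (h : k < n) :
    (((k + 1).factorial : ℝ) * (((n + 1) - (k + 1) - 1).factorial : ℝ)) / ((n + 1).factorial : ℝ)
      = (((k : ℝ) + 1) / ((n : ℝ) + 1))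
        * (((k.factorial : ℝ) * ((n - k - 1).factorial : ℝ)) / (n.factorial : ℝ)) := by
  have h1 : (n + 1) - (k + 1) - 1 = n - k - 1 := by omega
  have hfac : ((n + 1).factorial : ℝ) = ((n : ℝ) + 1) * n.factorial := by
    rw [Nat.factorial_succ]; push_cast; ring
  have hfac2 : (((k + 1).factorial : ℕ) : ℝ) = ((k : ℝ) + 1) * k.factorial := by
    rw [Nat.factorial_succ]; push_cast; ring
  rw [h1, hfac, hfac2]
  have h2 : ((n : ℝ)) + 1 ≠ 0 := by positivity
  have h3 : (n.factorial : ℝ) ≠ 0 := by positivity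
  field_simp

/-- Data value decomposition in the augmented game. -/
theorem extended_shapley_data_value {α : Type*} [DecidableEq α]
    (N : Finset α) (a : α) (ha : a ∉ N) (i : α) (hi : i ∈ N)
    (vA vB : Finset α → ℝ) (hA0 : vA ∅ = 0) (hB0 : vB ∅ = 0)
    (vt : Finset α → ℝ)
    (hvt : ∀ S ⊆ insert a N, vt S = if a ∈ S then vA (S.erase a) else vB S) :
    ∑ S ∈ ((insert a N).erase i).powerset,
      (S.card.factorial * ((insert a N).card - S.card - 1).factorial : ℝ)
          / (((insert a N).card.factorial : ℝ))
        * (vt (insert i S) - vt S)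
    = (∑ S ∈ (N.erase i).powerset,
        (((S.card : ℝ) + 1) / ((N.card : ℝ) + 1))
          * ((S.card.factorial * (N.card - S.card - 1).factorial : ℝ) / (N.card.factorial : ℝ))
          * (vA (insert i S) - vA S))
      + ∑ S ∈ (N.erase i).powerset,
        (1 - ((S.card : ℝ) + 1) / ((N.card : ℝ) + 1))
          * ((S.card.factorial * (N.card - S.card - 1).factorial : ℝ) / (N.card.factorial : ℝ))
          * (vB (insert i S) - vB S) := by
  have hia : i ≠ a := fun h => ha (h ▸ hi)
  have herase : (insert a N).erase i = insert a (N.erase i) :=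
    Finset.erase_insert_of_ne hia.symm
  have hane : a ∉ N.erase i := fun h => ha (Finset.mem_of_mem_erase h)
  have hcard : (insert a N).card = N.card + 1 := Finset.card_insert_of_notMem ha
  rw [herase, hcard, Finset.sum_powerset_insert hane]
  have key : ∀ T ∈ (N.erase i).powerset,
      T ⊆ N ∧ a ∉ T ∧ i ∉ T ∧ T.card < N.card := by
    intro T hT
    rw [Finset.mem_powerset] at hT
    have h1 : T ⊆ N := hT.trans (Finset.erase_subset _ _)
    have h2 : a ∉ T := fun h => ha (h1 h)
    have h3 : i ∉ T := fun h => (Finset.notMem_erase i N) (hT h)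
    refine ⟨h1, h2, h3, ?_⟩
    have h5 : T.card ≤ (N.erase i).card := Finset.card_le_card hT
    rw [Finset.card_erase_of_mem hi] at h5
    have h6 : 0 < N.card := Finset.card_pos.mpr ⟨i, hi⟩
    omega
  -- term-by-term rewriting
  rw [add_comm (∑ S ∈ (N.erase i).powerset, _ * _ * (vA _ - vA _))]
  congr 1
  · apply Finset.sum_congr rfl
    intro T hT
    obtain ⟨hTN, haT, hiT, hck⟩ := key T hT
    have hTsub : T ⊆ insert a N := hTN.trans (Finset.subset_insert a N)
    have hiTsub : insert i T ⊆ insert a N :=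
      Finset.insert_subset (Finset.mem_insert_of_mem hi) hTsub
    rw [hvt T hTsub, hvt (insert i T) hiTsub,
      if_neg haT, if_neg (by simp [hia.symm, haT])]
    rw [← shap_auxB N.card T.card hck]
  · apply Finset.sum_congr rfl
    intro T hT
    obtain ⟨hTN, haT, hiT, hck⟩ := key T hT
    have haTsub : insert a T ⊆ insert a N := Finset.insert_subset_insert a hTN
    have hiaTsub : insert i (insert a T) ⊆ insert a N :=
      Finset.insert_subset (Finset.mem_insert_of_mem hi) haTsub
    have hcaT : (insert a T).card = T.card + 1 := Finset.card_insert_of_notMem haT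
    rw [hvt (insert a T) haTsub, hvt (insert i (insert a T)) hiaTsub,
      if_pos (Finset.mem_insert_self a T),
      if_pos (by simp), hcaT]
    have he1 : (insert a T).erase a = T := Finset.erase_insert haT
    have he2 : (insert i (insert a T)).erase a = insert i T := by
      rw [Finset.insert_comm, Finset.erase_insert (by simp [hia.symm, haT])]
    rw [he1, he2, ← shap_auxA N.card T.card hck]
end

section
/- Efficiency of Extended Shapley: with φ_A(v) = ∑_{S ⊆ N} (|S|!·(n−|S|)!/(n+1)!)·(v_A(S) − v_B(S)) and φ_i(v) = ∑_{S ⊆ N \ {i}} [w_{S,N}·τ_{S,N}·(v_A(S ∪ {i}) − v_A(S)) + (1 − w_{S,N})·τ_{S,N}·(v_B(S ∪ {i}) − v_B(S))], one has φ_A(v) + ∑_{i ∈ N} φ_i(v) = v_A(N), provided v_A(∅) = v_B(∅) = 0. -/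
/-!
Write `betaWeight n s = s! (n - s)! / (n + 1)!` for the weight of `φ_A`. The two coefficients of
`φ_i` are `betaWeight n (s + 1)` and `betaWeight n s`, and both families of weighted marginal
contributions telescope, thanks to `(s + 1) · betaWeight n s = (n - s) · betaWeight n (s + 1)`:
the first sums to `v_A(N) - ∑_T betaWeight n |T| · v_A(T)` and the second to
`∑_T betaWeight n |T| · v_B(T) - v_B(∅)`. Adding `φ_A` cancels both sums.
-/

open Finset

namespace Finset

variable {α β : Type*} [DecidableEq α]

theorem sum_sum_powerset_erase_insert [AddCommMonoid β] (N : Finset α) (F : Finset α → β) :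
    ∑ i ∈ N, ∑ S ∈ (N.erase i).powerset, F (insert i S) = ∑ T ∈ N.powerset, #T • F T := by
  calc ∑ i ∈ N, ∑ S ∈ (N.erase i).powerset, F (insert i S)
      = ∑ i ∈ N, ∑ T ∈ N.powerset with i ∈ T, F T := by
        refine sum_congr rfl fun i hi => sum_nbij' (insert i) (erase · i) ?_ ?_ ?_ ?_ fun _ _ => rfl
        all_goals intro S hS; simp_all [subset_erase, insert_subset_iff, erase_subset_iff_of_mem]
    _ = ∑ T ∈ N.powerset, ∑ i ∈ T, F T :=
        sum_comm' fun i T => by simp only [mem_filter, mem_powerset]; grind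
    _ = ∑ T ∈ N.powerset, #T • F T := by simp only [sum_const]

theorem sum_sum_powerset_erase [AddCommMonoid β] (N : Finset α) (G : Finset α → β) :
    ∑ i ∈ N, ∑ S ∈ (N.erase i).powerset, G S = ∑ S ∈ N.powerset, (#N - #S) • G S := by
  calc ∑ i ∈ N, ∑ S ∈ (N.erase i).powerset, G S = ∑ S ∈ N.powerset, ∑ i ∈ N \ S, G S :=
        sum_comm' fun i S => by simp only [mem_powerset, mem_sdiff, subset_erase]; tauto
    _ = _ := sum_congr rfl fun S hS => by rw [sum_const, card_sdiff_of_subset (mem_powerset.1 hS)]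

theorem sum_sum_powerset_erase_marginal (N : Finset α) (g h : ℕ → ℝ) (v : Finset α → ℝ) :
    ∑ i ∈ N, ∑ S ∈ (N.erase i).powerset, (g (#S + 1) * v (insert i S) - h #S * v S)
      = ∑ T ∈ N.powerset, (#T * g #T - (#N - #T) * h #T) * v T := by
  have hins : ∀ i ∈ N, ∑ S ∈ (N.erase i).powerset, g (#S + 1) * v (insert i S)
      = ∑ S ∈ (N.erase i).powerset, g #(insert i S) * v (insert i S) :=
    fun i _ => sum_congr rfl fun S hS => by
      rw [card_insert_of_notMem fun hi => notMem_erase i N (mem_powerset.1 hS hi)]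
  simp only [sum_sub_distrib]
  rw [sum_congr rfl hins, sum_sum_powerset_erase_insert N (fun T => g #T * v T),
    sum_sum_powerset_erase N (fun S => h #S * v S), ← sum_sub_distrib]
  refine sum_congr rfl fun T hT => ?_
  simp only [nsmul_eq_mul]
  rw [Nat.cast_sub (card_le_card (mem_powerset.1 hT))]
  ring

end Finset

/-- `betaWeight n s = B(s + 1, n - s + 1) = ∫₀¹ xˢ (1 - x)ⁿ⁻ˢ dx`. -/
noncomputable def betaWeight (n s : ℕ) : ℝ :=
  (s.factorial * (n - s).factorial : ℝ) / ((n + 1).factorial : ℝ)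

theorem succ_mul_betaWeight {n s : ℕ} (h : s < n) :
    (s + 1) * betaWeight n s = (n - s) * betaWeight n (s + 1) := by
  obtain ⟨k, rfl⟩ := Nat.exists_eq_add_of_lt h
  rw [betaWeight, betaWeight, show s + k + 1 - s = k + 1 by omega,
    show s + k + 1 - (s + 1) = k by omega]
  push_cast [Nat.factorial_succ]
  ring

theorem succ_mul_betaWeight_self (n : ℕ) : (n + 1) * betaWeight n n = 1 := by
  rw [betaWeight, Nat.sub_self, Nat.factorial_succ]
  push_cast [Nat.factorial_zero]
  field_simp

theorem succ_mul_betaWeight_zero (n : ℕ) : (n + 1) * betaWeight n 0 = 1 := by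
  rw [betaWeight, Nat.sub_zero, Nat.factorial_succ]
  push_cast [Nat.factorial_zero]
  field_simp

theorem mul_betaWeight_sub_mul_betaWeight_succ {n t : ℕ} (h : t ≤ n) :
    t * betaWeight n t - (n - t) * betaWeight n (t + 1)
      = (if t = n then 1 else 0) - betaWeight n t := by
  rcases h.lt_or_eq with h | rfl
  · rw [if_neg h.ne, ← succ_mul_betaWeight h]
    ring
  · rw [if_pos rfl, sub_self, zero_mul]
    linarith [succ_mul_betaWeight_self t]

theorem mul_betaWeight_pred_sub_mul_betaWeight {n t : ℕ} (h : t ≤ n) :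
    t * betaWeight n (t - 1) - (n - t) * betaWeight n t
      = betaWeight n t - if t = 0 then 1 else 0 := by
  rcases t with _ | s
  · rw [if_pos rfl]
    simp only [CharP.cast_eq_zero, zero_mul, sub_zero, zero_sub]
    linarith [succ_mul_betaWeight_zero n]
  · have hs := succ_mul_betaWeight (Nat.lt_of_succ_le h)
    rw [if_neg s.succ_ne_zero, Nat.add_sub_cancel]
    push_cast at hs ⊢
    linarith

theorem betaWeight_succ_eq (n s : ℕ) :
    betaWeight n (s + 1) = ((s : ℝ) + 1) / ((n : ℝ) + 1)
      * ((s.factorial * (n - s - 1).factorial : ℝ) / (n.factorial : ℝ)) := by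
  rw [betaWeight, Nat.sub_succ', Nat.factorial_succ, Nat.factorial_succ n]
  push_cast
  field_simp

theorem betaWeight_eq {n s : ℕ} (h : s < n) :
    betaWeight n s = (1 - ((s : ℝ) + 1) / ((n : ℝ) + 1))
      * ((s.factorial * (n - s - 1).factorial : ℝ) / (n.factorial : ℝ)) := by
  obtain ⟨k, rfl⟩ := Nat.exists_eq_add_of_lt h
  rw [betaWeight, show s + k + 1 - s = k + 1 by omega, Nat.add_sub_cancel,
    Nat.factorial_succ, Nat.factorial_succ (s + k + 1)]
  push_cast
  field_simp
  ring

section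

variable {α : Type*} [DecidableEq α]

theorem sum_sum_betaWeight_succ_mul_sub (N : Finset α) (v : Finset α → ℝ) :
    ∑ i ∈ N, ∑ S ∈ (N.erase i).powerset, betaWeight #N (#S + 1) * (v (insert i S) - v S)
      = v N - ∑ T ∈ N.powerset, betaWeight #N #T * v T := by
  simp only [mul_sub]
  refine (sum_sum_powerset_erase_marginal N (betaWeight #N) (fun s => betaWeight #N (s + 1)) v).trans ?_
  have hcoef : ∀ T ∈ N.powerset, (#T * betaWeight #N #T - (#N - #T) * betaWeight #N (#T + 1)) * v T
      = (if T = N then v T else 0) - betaWeight #N #T * v T := fun T hT => by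
    have hTN : #T = #N ↔ T = N :=
      ⟨fun h => eq_of_subset_of_card_le (mem_powerset.1 hT) h.ge, fun h => h ▸ rfl⟩
    rw [mul_betaWeight_sub_mul_betaWeight_succ (card_le_card (mem_powerset.1 hT))]
    simp only [hTN]
    split_ifs <;> ring
  rw [sum_congr rfl hcoef, sum_sub_distrib, sum_ite_eq' _ _ _, if_pos (mem_powerset_self N)]

theorem sum_sum_betaWeight_mul_sub (N : Finset α) (v : Finset α → ℝ) :
    ∑ i ∈ N, ∑ S ∈ (N.erase i).powerset, betaWeight #N #S * (v (insert i S) - v S)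
      = ∑ T ∈ N.powerset, betaWeight #N #T * v T - v ∅ := by
  simp only [mul_sub]
  refine (sum_sum_powerset_erase_marginal N (fun s => betaWeight #N (s - 1)) (betaWeight #N) v).trans ?_
  have hcoef : ∀ T ∈ N.powerset, (#T * betaWeight #N (#T - 1) - (#N - #T) * betaWeight #N #T) * v T
      = betaWeight #N #T * v T - if ∅ = T then v T else 0 := fun T hT => by
    rw [mul_betaWeight_pred_sub_mul_betaWeight (card_le_card (mem_powerset.1 hT))]
    simp only [card_eq_zero, eq_comm (a := ∅)]
    split_ifs <;> ring
  rw [sum_congr rfl hcoef, sum_sub_distrib, sum_ite_eq _ _ _, if_pos (empty_mem_powerset N)]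

end

theorem extended_shapley_efficiency_general {α : Type*} [DecidableEq α]
    (N : Finset α) (vA vB : Finset α → ℝ) (hB0 : vB ∅ = 0) :
    (∑ S ∈ N.powerset,
        (S.card.factorial * (N.card - S.card).factorial : ℝ) / ((N.card + 1).factorial : ℝ)
          * (vA S - vB S))
    + ∑ i ∈ N, ∑ S ∈ (N.erase i).powerset,
        ((((S.card : ℝ) + 1) / ((N.card : ℝ) + 1))
            * ((S.card.factorial * (N.card - S.card - 1).factorial : ℝ) / (N.card.factorial : ℝ))
            * (vA (insert i S) - vA S)
          + (1 - ((S.card : ℝ) + 1) / ((N.card : ℝ) + 1))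
            * ((S.card.factorial * (N.card - S.card - 1).factorial : ℝ) / (N.card.factorial : ℝ))
            * (vB (insert i S) - vB S))
    = vA N := by
  rw [sum_congr rfl fun i hi => sum_congr rfl fun S hS => by
    have hS : #S < #N := (card_le_card (mem_powerset.1 hS)).trans_lt (card_erase_lt_of_mem hi)
    rw [← betaWeight_succ_eq, ← betaWeight_eq hS]]
  simp only [sum_add_distrib]
  rw [sum_sum_betaWeight_succ_mul_sub, sum_sum_betaWeight_mul_sub, hB0]
  change ∑ S ∈ N.powerset, betaWeight #N #S * (vA S - vB S) + _ = _
  simp only [mul_sub, sum_sub_distrib]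
  ring

/-- Efficiency of Extended Shapley. -/
theorem extended_shapley_efficiency {α : Type*} [DecidableEq α]
    (N : Finset α) (vA vB : Finset α → ℝ) (hA0 : vA ∅ = 0) (hB0 : vB ∅ = 0) :
    (∑ S ∈ N.powerset,
        (S.card.factorial * (N.card - S.card).factorial : ℝ) / ((N.card + 1).factorial : ℝ)
          * (vA S - vB S))
    + ∑ i ∈ N, ∑ S ∈ (N.erase i).powerset,
        ((((S.card : ℝ) + 1) / ((N.card : ℝ) + 1))
            * ((S.card.factorial * (N.card - S.card - 1).factorial : ℝ) / (N.card.factorial : ℝ))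
            * (vA (insert i S) - vA S)
          + (1 - ((S.card : ℝ) + 1) / ((N.card : ℝ) + 1))
            * ((S.card.factorial * (N.card - S.card - 1).factorial : ℝ) / (N.card.factorial : ℝ))
            * (vB (insert i S) - vB S))
    = vA N :=
  extended_shapley_efficiency_general N vA vB hB0
end

section
/- Equitability between data and algorithm: let N be finite, a ∉ N, and ṽ(S) = v_A(S \ {a}) if a ∈ S, else v_B(S). If i ∈ N satisfies v_B(S ∪ {i}) = v_A(S) for every S ⊆ N \ {i}, then i and a are symmetric players in ṽ (i.e., ṽ(S ∪ {i}) = ṽ(S ∪ {a}) for all S ⊆ (N ∪ {a}) \ {i, a}), and hence the Shapley values of i and a in ṽ coincide. -/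
/-!
The hypothesis on `i` says exactly that adding `i` to a coalition of `N` has the same effect in
`v_B` as switching to `v_A`, i.e. as adding `a`; so `i` and `a` are symmetric players of `ṽ`.
Symmetric players have equal Shapley values: splitting the coalitions avoiding `i` (resp. `a`)
according to whether they contain the other player, the two marginal-contribution sums agree
term by term.
-/

open Finset

section Symmetric

variable {α : Type*} [DecidableEq α]

/-- The Shapley value is the case `c k = k! (|M| - k - 1)! / |M|!`. -/
theorem sum_marginal_eq_of_symmetric (c : ℕ → ℝ) (w : Finset α → ℝ) {M : Finset α} {i j : α}
    (hi : i ∈ M) (hj : j ∈ M)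
    (hsym : ∀ S ⊆ (M.erase i).erase j, w (insert i S) = w (insert j S)) :
    ∑ S ∈ (M.erase i).powerset, c S.card * (w (insert i S) - w S)
      = ∑ S ∈ (M.erase j).powerset, c S.card * (w (insert j S) - w S) := by
  obtain rfl | hij := eq_or_ne i j
  · rfl
  set T := (M.erase i).erase j
  have hMi : M.erase i = insert j T := (insert_erase (mem_erase.2 ⟨hij.symm, hj⟩)).symm
  have hMj : M.erase j = insert i T := by
    rw [show T = (M.erase j).erase i from erase_right_comm,
      insert_erase (mem_erase.2 ⟨hij, hi⟩)]
  have hjT : j ∉ T := notMem_erase j _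
  have hiT : i ∉ T := fun h => notMem_erase i M (mem_of_mem_erase h)
  rw [hMi, hMj, sum_powerset_insert hjT, sum_powerset_insert hiT, ← sum_add_distrib,
    ← sum_add_distrib]
  refine sum_congr rfl fun S hS => ?_
  have hST := mem_powerset.1 hS
  rw [card_insert_of_notMem fun h => hjT (hST h), card_insert_of_notMem fun h => hiT (hST h),
    insert_comm i j, hsym S hST]

end Symmetric

/-- Equitability between data and algorithm: symmetric players in the augmented game. -/
theorem augmented_equitability {α : Type*} [DecidableEq α]
    (N : Finset α) (a : α) (ha : a ∉ N) (i : α) (hi : i ∈ N)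
    (vA vB : Finset α → ℝ)
    (heq : ∀ S ⊆ N.erase i, vB (insert i S) = vA S)
    (vt : Finset α → ℝ)
    (hvt : ∀ S ⊆ insert a N, vt S = if a ∈ S then vA (S.erase a) else vB S) :
    (∀ S ⊆ ((insert a N).erase i).erase a, vt (insert i S) = vt (insert a S))
    ∧ ∑ S ∈ ((insert a N).erase i).powerset,
        (S.card.factorial * ((insert a N).card - S.card - 1).factorial : ℝ)
            / (((insert a N).card.factorial : ℝ))
          * (vt (insert i S) - vt S)
      = ∑ S ∈ ((insert a N).erase a).powerset,
        (S.card.factorial * ((insert a N).card - S.card - 1).factorial : ℝ)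
            / (((insert a N).card.factorial : ℝ))
          * (vt (insert a S) - vt S) := by
  have hia : i ≠ a := ne_of_mem_of_not_mem hi ha
  have hsym : ∀ S ⊆ ((insert a N).erase i).erase a, vt (insert i S) = vt (insert a S) := by
    intro S hS
    rw [erase_right_comm, erase_insert ha] at hS
    have haS : a ∉ S := fun h => ha (mem_of_mem_erase (hS h))
    have hSN : S ⊆ N := hS.trans (erase_subset i N)
    rw [hvt _ ((insert_subset hi hSN).trans (subset_insert a N)),
      hvt _ (insert_subset_insert a hSN), if_neg (by simp [hia.symm, haS]),
      if_pos (mem_insert_self a S), erase_insert haS, heq S hS]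
  exact ⟨hsym, sum_marginal_eq_of_symmetric
    (fun k => (k.factorial * ((insert a N).card - k - 1).factorial : ℝ) /
      ((insert a N).card.factorial : ℝ))
    vt (mem_insert_of_mem hi) (mem_insert_self a N) hsym⟩
end
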